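/- Let k ≥ 4, let l be a divisor of k, and let T = S ∪ {1, 2, ..., l−1} ∪ {x : 3k+1 < x ≤ 4k+1 and x ≢ 1 (mod l)}, where S = ⟨2k+1, ..., 3k+1⟩. Then |λ(T)| = (3k²l − k² + 4kl³ + 3kl² + kl − 2l⁴ + 2l³)/(2l²). -/

import Mathlib

/-!
Each gap `x` of a numerical set `T` contributes to `λ(T)` the elements of `T` below it, i.e.
`x` minus the number of gaps below `x`; summing over the gaps gives
`|λ(T)| = ∑ (gaps) - (genus choose 2)`. For the set `T` of the theorem the gaps are the interval
`[l, 2k]` and the progression `3k + 1 + m l`, `1 ≤ m ≤ k / l`, so both sums are Gauss sums.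
-/

/-- The size of the partition associated to a numerical set `T`. -/
noncomputable def lamSize (T : Set ℕ) : ℕ :=
  {p : ℕ × ℕ | p.1 ∈ T ∧ p.2 ∉ T ∧ p.1 < p.2}.ncard

open Finset

theorem sum_card_filter_lt_eq_choose_two {α : Type*} [LinearOrder α] (s : Finset α) :
    ∑ x ∈ s, #{y ∈ s | y < x} = (#s).choose 2 := by
  induction s using Finset.induction_on_max with
  | empty => simp
  | insert a s ha ih =>
    have ha' : a ∉ s := fun h => lt_irrefl a (ha a h)
    have hbelow_a : {y ∈ insert a s | y < a} = s := by
      ext y; simp only [mem_filter, mem_insert]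
      exact ⟨fun ⟨h, hy⟩ => h.resolve_left hy.ne, fun h => ⟨Or.inr h, ha y h⟩⟩
    have hbelow : ∀ x ∈ s, {y ∈ insert a s | y < x} = {y ∈ s | y < x} := fun x hx => by
      rw [filter_insert, if_neg (ha x hx).not_gt]
    rw [sum_insert ha', hbelow_a, sum_congr rfl fun x hx => congrArg card (hbelow x hx), ih,
      card_insert_of_notMem ha', Nat.choose_succ_succ', Nat.choose_one_right, add_comm]

theorem lamSize_compl_add_sum_card_filter_lt (G : Finset ℕ) :
    lamSize (↑G)ᶜ + ∑ x ∈ G, #{y ∈ G | y < x} = ∑ x ∈ G, x := by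
  have hpairs :
      {p : ℕ × ℕ | p.1 ∈ (↑G : Set ℕ)ᶜ ∧ p.2 ∉ (↑G : Set ℕ)ᶜ ∧ p.1 < p.2} =
        ↑(G.biUnion fun x => {u ∈ range x | u ∉ G} ×ˢ {x}) := by
    ext ⟨u, x⟩
    simp [and_comm, and_left_comm]
  have hdisj : (G : Set ℕ).PairwiseDisjoint fun x => {u ∈ range x | u ∉ G} ×ˢ {x} :=
    fun x _ y _ hxy => disjoint_product.mpr (Or.inr (disjoint_singleton.mpr hxy))
  have hsplit : ∀ x, #{u ∈ range x | u ∉ G} + #{y ∈ G | y < x} = x := fun x => by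
    have : {y ∈ G | y < x} = {u ∈ range x | u ∈ G} := by ext; simp [and_comm]
    rw [this, add_comm, card_filter_add_card_filter_not, card_range]
  rw [lamSize, hpairs, Set.ncard_coe_finset, card_biUnion hdisj, ← sum_add_distrib]
  exact sum_congr rfl fun x _ => by rw [card_product, card_singleton, mul_one, hsplit]

theorem lamSize_compl_add_choose_two (G : Finset ℕ) :
    lamSize (↑G)ᶜ + (#G).choose 2 = ∑ x ∈ G, x := by
  rw [← sum_card_filter_lt_eq_choose_two, lamSize_compl_add_sum_card_filter_lt]

theorem mem_closure_Icc_iff (k n : ℕ) :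
    n ∈ AddSubmonoid.closure (Set.Icc (2 * k + 1) (3 * k + 1)) ↔
      n = 0 ∨ n ∈ Set.Icc (2 * k + 1) (3 * k + 1) ∨ 4 * k + 2 ≤ n := by
  constructor
  · intro h
    induction h using AddSubmonoid.closure_induction with
    | mem x hx => exact Or.inr (Or.inl hx)
    | zero => exact Or.inl rfl
    | add a b _ _ ha hb => simp only [Set.mem_Icc] at ha hb ⊢; omega
  · rintro (rfl | h | h)
    · exact zero_mem _
    · exact AddSubmonoid.subset_closure h
    · induction n using Nat.strong_induction_on with
      | _ n ih =>
        have mem : ∀ m ∈ Set.Icc (2 * k + 1) (3 * k + 1),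
            m ∈ AddSubmonoid.closure (Set.Icc (2 * k + 1) (3 * k + 1)) :=
          fun m hm => AddSubmonoid.subset_closure hm
        by_cases hn : n ≤ 6 * k + 2
        · obtain ⟨a, b, ha, hb, rfl⟩ : ∃ a b, a ∈ Set.Icc (2 * k + 1) (3 * k + 1) ∧
              b ∈ Set.Icc (2 * k + 1) (3 * k + 1) ∧ n = a + b := by
            refine ⟨n / 2, n - n / 2, ?_, ?_, by omega⟩ <;> simp only [Set.mem_Icc] <;> omega
          exact add_mem (mem a ha) (mem b hb)
        · rw [show n = (2 * k + 1) + (n - (2 * k + 1)) by omega]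
          exact add_mem (mem _ ⟨le_rfl, by omega⟩) (ih _ (by omega) (by omega))

theorem add_mul_injective (c : ℕ) {l : ℕ} (hl : 0 < l) :
    Function.Injective fun m => c + m * l :=
  fun _ _ hab => Nat.eq_of_mul_eq_mul_right hl (Nat.add_left_cancel hab)

theorem mem_image_Icc_add_mul_iff {l : ℕ} (hl : 0 < l) (c q y : ℕ) :
    y ∈ (Icc 1 q).image (fun m => c + m * l) ↔ c < y ∧ y ≤ c + q * l ∧ y % l = c % l := by
  simp only [mem_image, mem_Icc]
  constructor
  · rintro ⟨m, ⟨hm1, hmq⟩, rfl⟩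
    exact ⟨by nlinarith, by nlinarith, Nat.add_mul_mod_self_right c m l⟩
  · rintro ⟨hcy, hyq, hmod⟩
    obtain ⟨m, hm⟩ : l ∣ y - c := Nat.ModEq.dvd' hmod.symm
    have hy : y = c + m * l := by rw [mul_comm] at hm; omega
    refine ⟨m, ⟨Nat.pos_of_ne_zero ?_, ?_⟩, hy.symm⟩
    · rintro rfl; omega
    · by_contra! h
      nlinarith

theorem sum_Icc_id_mul_two_add {a b : ℕ} (h : a ≤ b + 1) :
    (∑ i ∈ Icc a b, i) * 2 + a * (a - 1) = (b + 1) * b := by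
  have hgauss := sum_range_id_mul_two (b + 1)
  rw [Nat.add_sub_cancel] at hgauss
  rw [← hgauss, ← sum_range_id_mul_two, ← sum_range_add_sum_Ico _ h, Ico_add_one_right_eq_Icc]
  ring

def gapSet (k l q : ℕ) : Finset ℕ :=
  Icc l (2 * k) ∪ (Icc 1 q).image fun m => 3 * k + 1 + m * l

section gapSet

variable {k l q : ℕ}

theorem mem_image_Icc_iff_of_eq_mul (hl : 0 < l) (hkq : k = l * q) (x : ℕ) :
    x ∈ (Icc 1 q).image (fun m => 3 * k + 1 + m * l) ↔
      3 * k + 1 < x ∧ x ≤ 4 * k + 1 ∧ x % l = 1 % l := by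
  have hc : (3 * k + 1) % l = 1 % l := by
    rw [hkq, show 3 * (l * q) + 1 = 1 + 3 * q * l by ring, Nat.add_mul_mod_self_right]
  rw [mem_image_Icc_add_mul_iff hl, hc, show 3 * k + 1 + q * l = 4 * k + 1 by rw [hkq]; ring]

theorem disjoint_Icc_image_Icc (hl : 0 < l) (hkq : k = l * q) :
    Disjoint (Icc l (2 * k)) ((Icc 1 q).image fun m => 3 * k + 1 + m * l) :=
  disjoint_left.mpr fun x hx hxP => by
    rw [mem_Icc] at hx; rw [mem_image_Icc_iff_of_eq_mul hl hkq] at hxP; omega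

theorem compl_coe_gapSet (hl : 0 < l) (hlk : l ≤ k) (hkq : k = l * q) :
    (↑(gapSet k l q))ᶜ =
      {n : ℕ | n ∈ AddSubmonoid.closure (Set.Icc (2 * k + 1) (3 * k + 1))} ∪
        Set.Icc 1 (l - 1) ∪ {x : ℕ | 3 * k + 1 < x ∧ x ≤ 4 * k + 1 ∧ x % l ≠ 1 % l} := by
  ext n
  simp only [gapSet, Set.mem_union, Set.mem_ofPred_eq, mem_closure_Icc_iff, Set.mem_Icc,
    Set.mem_compl_iff, mem_coe, mem_union, mem_Icc, mem_image_Icc_iff_of_eq_mul hl hkq]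
  omega

theorem card_gapSet (hl : 0 < l) (hkq : k = l * q) : #(gapSet k l q) = (2 * k + 1 - l) + q := by
  rw [gapSet, card_union_of_disjoint (disjoint_Icc_image_Icc hl hkq), Nat.card_Icc,
    card_image_of_injective _ (add_mul_injective _ hl), Nat.card_Icc, Nat.add_sub_cancel]

theorem sum_gapSet (hl : 0 < l) (hkq : k = l * q) :
    ∑ x ∈ gapSet k l q, x =
      ∑ x ∈ Icc l (2 * k), x + (q * (3 * k + 1) + (∑ m ∈ Icc 1 q, m) * l) := by
  rw [gapSet, sum_union (disjoint_Icc_image_Icc hl hkq),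
    sum_image fun a _ b _ hab => add_mul_injective _ hl hab, sum_add_distrib, sum_const,
    Nat.card_Icc, ← sum_mul, smul_eq_mul, Nat.add_sub_cancel]

end gapSet

theorem stmt_13 (k l : ℕ) (hk : 4 ≤ k) (hl : l ∣ k)
    (S T : Set ℕ)
    (hS : S = {n : ℕ | n ∈ AddSubmonoid.closure (Set.Icc (2 * k + 1) (3 * k + 1))})
    (hT : T = S ∪ Set.Icc 1 (l - 1) ∪
      {x : ℕ | 3 * k + 1 < x ∧ x ≤ 4 * k + 1 ∧ x % l ≠ 1 % l}) :
    (2 * (l : ℤ) ^ 2) * (lamSize T : ℤ) =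
      3 * (k : ℤ) ^ 2 * l - (k : ℤ) ^ 2 + 4 * k * (l : ℤ) ^ 3
        + 3 * k * (l : ℤ) ^ 2 + k * l - 2 * (l : ℤ) ^ 4 + 2 * (l : ℤ) ^ 3 := by
  have hl0 : 0 < l := Nat.pos_of_dvd_of_pos hl (by omega)
  have hlk : l ≤ k := Nat.le_of_dvd (by omega) hl
  obtain ⟨q, hkq⟩ := hl
  have hlam := lamSize_compl_add_choose_two (gapSet k l q)
  rw [compl_coe_gapSet hl0 hlk hkq, ← hS, ← hT, card_gapSet hl0 hkq, sum_gapSet hl0 hkq] at hlam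
  have hchoose :
      (2 * k + 1 - l + q).choose 2 * 2 = (2 * k + 1 - l + q) * (2 * k + 1 - l + q - 1) := by
    rw [Nat.choose_two_right, Nat.div_mul_cancel (Nat.even_mul_pred_self _).two_dvd]
  have hgauss1 := sum_Icc_id_mul_two_add (show l ≤ 2 * k + 1 by omega)
  have hgauss2 := sum_Icc_id_mul_two_add (show 1 ≤ q + 1 by omega)
  have hl1 : 1 ≤ l := hl0
  have hg1 : 1 ≤ 2 * k + 1 - l + q := by omega
  zify [hl1, hg1, show l ≤ 2 * k + 1 by omega] at hlam hchoose hgauss1 hgauss2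
  subst hkq
  push_cast at hlam hchoose hgauss1 hgauss2 ⊢
  linear_combination (2 * (l : ℤ) ^ 2) * hlam - (l : ℤ) ^ 2 * hchoose + (l : ℤ) ^ 2 * hgauss1
    + (l : ℤ) ^ 3 * hgauss2
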